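/- Every 2-coloring of the Boolean lattice Q_5 in which the empty set, the full ground set [5], and at least three of the five singleton sets are colored blue contains a red copy of Q_2 or a blue copy of Q_3. -/

import Mathlib

/-- A red copy of the Boolean lattice `Q m` inside the 2-colored Boolean lattice `Q N`,
where `c S = true` means `S` is red and `c S = false` means `S` is blue. -/
def HasRedCopy (m N : ℕ) (c : Finset (Fin N) → Bool) : Prop :=
  ∃ f : Finset (Fin m) → Finset (Fin N),
    Function.Injective f ∧
    (∀ S T : Finset (Fin m), S ⊆ T ↔ f S ⊆ f T) ∧
    (∀ S : Finset (Fin m), c (f S) = true)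

/-- A blue copy of the Boolean lattice `Q m` inside the 2-colored Boolean lattice `Q N`. -/
def HasBlueCopy (m N : ℕ) (c : Finset (Fin N) → Bool) : Prop :=
  ∃ f : Finset (Fin m) → Finset (Fin N),
    Function.Injective f ∧
    (∀ S T : Finset (Fin m), S ⊆ T ↔ f S ⊆ f T) ∧
    (∀ S : Finset (Fin m), c (f S) = false)

/-
Take three blue singletons `{a}, {b}, {v}`. For a pair, say `{a, b}`, the sets containing `a` and
`b` but not `v` form the interval `[{a, b}, [5] \ {v}]`, a copy of `Q_2`; so either one of them is
blue or there is a red `Q_2`. If each of the three pairs has such a blue set, these three sets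
together with `∅`, the three singletons and `[5]` form a blue `Q_3`: inclusions between them are
read off from their traces on `{a, b, v}`.
-/

open Finset

section Trace

variable {α β : Type*} [DecidableEq α] [Fintype β]

def orderEmbOfTrace (f : Finset β → Finset α) (g : β ↪ α) (hf : Monotone f)
    (htrace : ∀ S, f S ∩ univ.map g = S.map g) : Finset β ↪o Finset α :=
  OrderEmbedding.ofMapLEIff f fun S T =>
    ⟨fun h => by simpa only [htrace, map_subset_map] using
      (inter_subset_inter_right h : f S ∩ univ.map g ⊆ f T ∩ univ.map g), fun h => hf h⟩

def unionMapOrderEmb (A : Finset α) (e : β ↪ α) (hA : Disjoint A (univ.map e)) :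
    Finset β ↪o Finset α :=
  orderEmbOfTrace (fun Y => A ∪ Y.map e) e
    (fun _ _ h => union_subset_union_right (map_subset_map.2 h)) fun Y => by
      rw [union_inter_distrib_right, disjoint_iff_inter_eq_empty.1 hA, empty_union,
        inter_eq_left.2 (map_subset_map.2 (subset_univ Y))]

end Trace

variable {N : ℕ} {c : Finset (Fin N) → Bool}

lemma hasRedCopy_of_orderEmbedding {m : ℕ} (f : Finset (Fin m) ↪o Finset (Fin N))
    (hf : ∀ S, c (f S) = true) : HasRedCopy m N c :=
  ⟨f, f.injective, fun _ _ => f.le_iff_le.symm, hf⟩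

lemma hasBlueCopy_of_orderEmbedding {m : ℕ} (f : Finset (Fin m) ↪o Finset (Fin N))
    (hf : ∀ S, c (f S) = false) : HasBlueCopy m N c :=
  ⟨f, f.injective, fun _ _ => f.le_iff_le.symm, hf⟩

/-- The sets with a prescribed trace on an `m`-set form an interval, a copy of `Q_(N - m)`. -/
lemma exists_blue_inter_eq_or_hasRedCopy {m : ℕ} (g : Fin m ↪ Fin N) (T : Finset (Fin m)) :
    (∃ X, X ∩ univ.map g = T.map g ∧ c X = false) ∨ HasRedCopy (N - m) N c := by
  refine or_iff_not_imp_left.2 fun hblue => ?_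
  push Not at hblue
  set R := univ.map g
  let e := Rᶜ.orderEmbOfFin (k := N - m) (by simp [R, card_compl])
  have he : univ.map e.toEmbedding = Rᶜ := by
    apply coe_injective
    simp [e]
  have hT : Disjoint (T.map g) (univ.map e.toEmbedding) := by
    rw [he, disjoint_compl_right_iff]
    exact map_subset_map.2 (subset_univ T)
  refine hasRedCopy_of_orderEmbedding (unionMapOrderEmb _ _ hT) fun Y => ?_
  have hY : Disjoint (Y.map e.toEmbedding) R := by
    rw [← le_compl_iff_disjoint_right, ← he]
    exact map_subset_map.2 (subset_univ Y)
  have htrace : (T.map g ∪ Y.map e.toEmbedding) ∩ R = T.map g := by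
    rw [union_inter_distrib_right, disjoint_iff_inter_eq_empty.1 hY, union_empty,
      inter_eq_left.2 (map_subset_map.2 (subset_univ T))]
  show c (T.map g ∪ Y.map e.toEmbedding) = true
  simpa using hblue _ htrace

/-- In `Q_3` a strict inclusion `S ⊂ T` has `#S ≤ 1` or `T = univ`, so once the lower two levels
and the top of the copy are `S.map g` and `univ`, any middle level with the right traces is
monotone. -/
lemma hasBlueCopy_three (g : Fin 3 ↪ Fin N) (hbot : c ∅ = false) (htop : c univ = false)
    (hsing : ∀ i, c {g i} = false)
    (hpair : ∀ T : Finset (Fin 3), #T = 2 → ∃ X, X ∩ univ.map g = T.map g ∧ c X = false) :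
    HasBlueCopy 3 N c := by
  choose! P hPtrace hPblue using hpair
  let f : Finset (Fin 3) → Finset (Fin N) := fun S =>
    if #S ≤ 1 then S.map g else if #S = 2 then P S else univ
  have htrace : ∀ S, f S ∩ univ.map g = S.map g := by
    intro S
    by_cases h1 : #S ≤ 1
    · simp only [f, if_pos h1]
      exact inter_eq_left.2 (map_subset_map.2 (subset_univ S))
    by_cases h2 : #S = 2
    · simp only [f, if_neg h1, if_pos h2]
      exact hPtrace S h2
    · have hS : S = univ := by
        rw [← card_eq_iff_eq_univ]
        have := card_le_univ S
        simp only [Fintype.card_fin] at this ⊢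
        omega
      simp [f, hS]
  have hmono : Monotone f := by
    intro S T hST
    by_cases h1 : #S ≤ 1
    · calc f S = S.map g := if_pos h1
        _ ⊆ T.map g := map_subset_map.2 hST
        _ = f T ∩ univ.map g := (htrace T).symm
        _ ⊆ f T := inter_subset_left
    have hcard := card_le_card hST
    by_cases hT : #T = 2
    · rw [eq_of_subset_of_card_le hST (by omega)]
    · have hfT : f T = univ := by
        simp only [f]
        rw [if_neg (by omega), if_neg hT]
      exact hfT ▸ subset_univ _
  refine hasBlueCopy_of_orderEmbedding (orderEmbOfTrace f g hmono htrace) fun S => ?_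
  show c (f S) = false
  by_cases h1 : #S ≤ 1
  · rcases Nat.le_one_iff_eq_zero_or_eq_one.1 h1 with h0 | h1'
    · simp [f, card_eq_zero.1 h0, hbot]
    · obtain ⟨i, rfl⟩ := card_eq_one.1 h1'
      simp [f, hsing]
  · simp only [f, if_neg h1]
    split_ifs with h2
    exacts [hPblue S h2, htop]

/-- every 2-coloring of Q_5 in which ∅, [5], and at least three of the five
singletons are blue contains a red copy of Q_2 or a blue copy of Q_3. -/
theorem Q5_three_blue_singletons (c : Finset (Fin 5) → Bool)
    (hbot : c ∅ = false) (htop : c Finset.univ = false)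
    (hsing : ∃ s : Finset (Fin 5), 3 ≤ s.card ∧ ∀ x ∈ s, c {x} = false) :
    HasRedCopy 2 5 c ∨ HasBlueCopy 3 5 c := by
  obtain ⟨s, hs3, hsblue⟩ := hsing
  let g : Fin 3 ↪ Fin 5 := (Fin.castLEEmb hs3).trans (s.orderEmbOfFin rfl).toEmbedding
  have hg : ∀ i, c {g i} = false := fun i => hsblue _ (s.orderEmbOfFin_mem rfl _)
  by_cases hred : HasRedCopy 2 5 c
  · exact Or.inl hred
  · exact Or.inr (hasBlueCopy_three g hbot htop hg fun T _ =>
      (exists_blue_inter_eq_or_hasRedCopy g T).resolve_right hred)
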